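/- arXiv:1211.5277 — 6 statements merged into one kernel-verified Lean document; each statement's English description precedes it below -/
import Mathlib

section
/- Let ℓ ∈ ℕ₀ and define ψ̃_ℓ : ℝ → ℂ by ψ̃_ℓ(t) = (1+it)^{2ℓ} · 2·𝟙_{[-1,1]}(t). Then for every w ∈ ℝ one has (Fψ̃_ℓ)(w) = √(8/π) · Σ_{n=0}^{2ℓ} binomial(2ℓ, n) · (−1)^n · (d^n/dw^n) sinc(w), where the n-th derivative is the n-th iterated derivative of sinc at w. -/
/-!
The Fourier transform of the box `𝟙_{[-1,1]}` is `2 sinc`. All moments of the box are integrable,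
so its transform is smooth and its `n`-th derivative is the transform of `(-it)ⁿ 𝟙_{[-1,1]}`;
hence `∫ (-it)ⁿ 𝟙_{[-1,1]}(t) e^{-itw} dt = 2 sinc⁽ⁿ⁾(w)`. Writing
`(1 + it)^{2ℓ} = ∑ₙ C(2ℓ, n) (-1)ⁿ (-it)ⁿ` and integrating term by term gives the formula,
with the constant `4 / √(2π) = √(8/π)`.
-/

open MeasureTheory Finset

/-- `sinc x = sin x / x` for `x ≠ 0`, `sinc 0 = 1`. -/
noncomputable def sinc (x : ℝ) : ℝ := if x = 0 then 1 else Real.sin x / x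

/-- `ψ̃_ℓ(t) = (1+it)^{2ℓ} · 2·𝟙_{[-1,1]}(t)`. -/
noncomputable def psiTilde (ℓ : ℕ) (t : ℝ) : ℂ :=
  (1 + Complex.I * t) ^ (2 * ℓ) * (if t ∈ Set.Icc (-1 : ℝ) 1 then 2 else 0)

open Complex FourierTransform
open scoped Real

section FourierKernel

variable {E : Type*} [NormedAddCommGroup E] [NormedSpace ℂ E]

lemma integral_exp_smul_eq_fourier (f : ℝ → E) (w : ℝ) :
    ∫ t : ℝ, exp (-(I * t * w)) • f t = 𝓕 f ((2 * π)⁻¹ * w) := by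
  rw [Real.fourier_real_eq_integral_exp_smul]
  congr 1 with t
  congr 2
  push_cast
  field_simp

lemma MeasureTheory.Integrable.exp_neg_I_mul_smul {f : ℝ → E} (hf : Integrable f) (w : ℝ) :
    Integrable fun t : ℝ ↦ exp (-(I * t * w)) • f t := by
  refine hf.norm.mono' (by fun_prop) (ae_of_all _ fun t ↦ ?_)
  rw [norm_smul, show -(I * t * w) = ((-(t * w) : ℝ) : ℂ) * I by push_cast; ring,
    norm_exp_ofReal_mul_I, one_mul]

lemma iteratedDeriv_integral_exp_smul {f : ℝ → E}
    (hf : ∀ k : ℕ, Integrable fun t : ℝ ↦ t ^ k • f t) (n : ℕ) (w : ℝ) :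
    iteratedDeriv n (fun w : ℝ ↦ ∫ t : ℝ, exp (-(I * t * w)) • f t) w
      = ∫ t : ℝ, exp (-(I * t * w)) • (-I * t) ^ n • f t := by
  have hmom (k : ℕ) : Integrable fun t : ℝ ↦ ‖t‖ ^ k * ‖f t‖ :=
    (hf k).norm.congr (ae_of_all _ fun t ↦ by simp [norm_smul])
  simp_rw [integral_exp_smul_eq_fourier]
  rw [iteratedDeriv_comp_const_smul (Real.contDiff_fourier (N := n) fun k _ ↦ hmom k),
    Real.iteratedDeriv_fourier (N := n) (fun k _ ↦ hf k) le_rfl]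
  simp only [Real.fourier_real_eq, ← integral_smul]
  congr 1 with t
  rw [smul_comm]
  congr 1
  rw [← Complex.coe_smul, smul_smul]
  congr 1
  push_cast
  rw [← mul_pow]
  congr 1
  field_simp

end FourierKernel

lemma deriv_ofReal_comp (f : ℝ → ℝ) (x : ℝ) :
    deriv (fun x ↦ (f x : ℂ)) x = deriv f x := by
  by_cases hf : DifferentiableAt ℝ f x
  · exact hf.hasDerivAt.ofReal_comp.deriv
  · have hf' : ¬ DifferentiableAt ℝ (fun x ↦ (f x : ℂ)) x := fun h ↦
      hf (by simpa [Function.comp_def] using (reCLM.differentiableAt (x := (f x : ℂ))).comp x h)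
    rw [deriv_zero_of_not_differentiableAt hf, deriv_zero_of_not_differentiableAt hf', ofReal_zero]

lemma iteratedDeriv_ofReal_comp (n : ℕ) (f : ℝ → ℝ) :
    iteratedDeriv n (fun x ↦ (f x : ℂ)) = fun x ↦ ((iteratedDeriv n f x : ℝ) : ℂ) := by
  induction n with
  | zero => simp
  | succ n ih => funext x; rw [iteratedDeriv_succ, ih, iteratedDeriv_succ, deriv_ofReal_comp]

lemma Continuous.integrable_smul_indicator_Icc {g : ℝ → ℂ} (hg : Continuous g) (a b : ℝ) :
    Integrable fun t : ℝ ↦ g t • (Set.Icc a b).indicator (1 : ℝ → ℂ) t := by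
  refine (hg.continuousOn.integrableOn_Icc.integrable_indicator
    (measurableSet_Icc (a := a) (b := b))).congr (ae_of_all _ fun t ↦ ?_)
  by_cases ht : t ∈ Set.Icc a b <;> simp [ht]

lemma integral_exp_smul_indicator_Icc (w : ℝ) :
    ∫ t : ℝ, exp (-(I * t * w)) • (Set.Icc (-1 : ℝ) 1).indicator (1 : ℝ → ℂ) t = 2 * sinc w := by
  have hbox : ∫ t : ℝ, exp (-(I * t * w)) • (Set.Icc (-1 : ℝ) 1).indicator (1 : ℝ → ℂ) t
      = ∫ t in (-1 : ℝ)..1, exp (-(I * w) * t) := by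
    have hind : (fun t : ℝ ↦ exp (-(I * t * w)) • (Set.Icc (-1 : ℝ) 1).indicator (1 : ℝ → ℂ) t)
        = (Set.Icc (-1 : ℝ) 1).indicator fun t ↦ exp (-(I * w) * t) := by
      ext t
      by_cases ht : t ∈ Set.Icc (-1 : ℝ) 1 <;> simp [ht, mul_right_comm]
    rw [hind, integral_indicator measurableSet_Icc, integral_Icc_eq_integral_Ioc,
      ← intervalIntegral.integral_of_le (by norm_num)]
  rw [hbox]
  rcases eq_or_ne w 0 with rfl | hw
  · simp [sinc]
    norm_num
  · have hIw : -(I * w) ≠ 0 := by simp [hw]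
    rw [integral_exp_mul_complex hIw, sinc, if_neg hw]
    push_cast
    rw [show -(I * w) * 1 = (-w : ℝ) * I by push_cast; ring,
      show -(I * w) * (-1) = (w : ℂ) * I by ring, exp_mul_I, exp_mul_I, ← ofReal_sin]
    push_cast
    rw [cos_neg, sin_neg]
    field_simp
    ring_nf

lemma integral_exp_smul_pow_smul_indicator_Icc (n : ℕ) (w : ℝ) :
    ∫ t : ℝ, exp (-(I * t * w)) • (-I * t) ^ n • (Set.Icc (-1 : ℝ) 1).indicator (1 : ℝ → ℂ) t
      = 2 * iteratedDeriv n sinc w := by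
  rw [← iteratedDeriv_integral_exp_smul fun k ↦ by
    simpa [Complex.real_smul] using (continuous_ofReal.pow k).integrable_smul_indicator_Icc (-1) 1]
  simp_rw [integral_exp_smul_indicator_Icc, iteratedDeriv_const_mul_field,
    iteratedDeriv_ofReal_comp]

lemma psiTilde_eq_sum (ℓ : ℕ) (t : ℝ) :
    psiTilde ℓ t = ∑ n ∈ range (2 * ℓ + 1), (2 * (2 * ℓ).choose n * (-1) ^ n : ℂ) *
      ((-I * t) ^ n • (Set.Icc (-1 : ℝ) 1).indicator (1 : ℝ → ℂ) t) := by
  rw [psiTilde, add_comm, add_pow, sum_mul]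
  refine sum_congr rfl fun n _ ↦ ?_
  have hsign : (-1 : ℂ) ^ n * (-I * t) ^ n = (I * t) ^ n := by rw [← mul_pow]; ring
  by_cases ht : t ∈ Set.Icc (-1 : ℝ) 1
  · simp only [ht, if_true, Set.indicator_of_mem, Pi.one_apply, smul_eq_mul]
    linear_combination (-2 * ((2 * ℓ).choose n : ℂ)) * hsign
  · simp [ht]

lemma sqrt_eight_div_pi : Real.sqrt (8 / π) = 4 / Real.sqrt (2 * π) := by
  rw [show 8 / π = 4 ^ 2 / (2 * π) by field_simp; norm_num, Real.sqrt_div' _ (by positivity),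
    Real.sqrt_sq (by norm_num)]

theorem stmt_1 (ℓ : ℕ) (w : ℝ) :
    (1 / (Real.sqrt (2 * Real.pi) : ℂ)) *
        ∫ t : ℝ, psiTilde ℓ t * Complex.exp (-(Complex.I * t * w)) =
      (Real.sqrt (8 / Real.pi) : ℂ) *
        ∑ n ∈ Finset.range (2 * ℓ + 1),
          (Nat.choose (2 * ℓ) n : ℂ) * (-1 : ℂ) ^ n * ((iteratedDeriv n sinc w : ℝ) : ℂ) := by
  set χ := (Set.Icc (-1 : ℝ) 1).indicator (1 : ℝ → ℂ)
  have hint (n : ℕ) (c : ℂ) :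
      Integrable fun t : ℝ ↦ c • exp (-(I * t * w)) • (-I * t) ^ n • χ t :=
    (((by fun_prop : Continuous fun t : ℝ ↦ (-I * t) ^ n).integrable_smul_indicator_Icc
      (-1) 1).exp_neg_I_mul_smul w).smul c
  have hψ (t : ℝ) : psiTilde ℓ t * exp (-(I * t * w)) = ∑ n ∈ range (2 * ℓ + 1),
      (2 * (2 * ℓ).choose n * (-1) ^ n : ℂ) • exp (-(I * t * w)) • (-I * t) ^ n • χ t := by
    rw [psiTilde_eq_sum, sum_mul]
    refine sum_congr rfl fun n _ ↦ ?_
    simp only [smul_eq_mul]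
    ring
  simp_rw [hψ]
  rw [integral_finsetSum _ fun n _ ↦ hint n _]
  simp_rw [integral_smul, χ, integral_exp_smul_pow_smul_indicator_Icc, sqrt_eight_div_pi, mul_sum]
  refine sum_congr rfl fun n _ ↦ ?_
  push_cast
  field_simp
  ring
end

section
/- For every n ∈ ℕ₀, the n-th iterated derivative of sinc is a bounded function on ℝ, and moreover (d^n/dx^n) sinc(x) tends to 0 as |x| → ∞ (i.e., along the filter where x → +∞ and where x → −∞). -/
/-
`sinc = dslope sin 0` is real analytic, so its derivatives are continuous. Away from `0`,
`sinc = sin · x⁻¹`, and Leibniz' rule with `|sin⁽ⁱ⁾| ≤ 1` and `|(x⁻¹)⁽ᵏ⁾| = k! / |x|ᵏ⁺¹` gives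
`|sinc⁽ⁿ⁾ x| ≤ 2ⁿ n! / |x|` for `|x| ≥ 1`. Hence `sinc⁽ⁿ⁾` vanishes at infinity, and a continuous
function vanishing at infinity is bounded.
-/

open Filter

open Nat Topology

section DSlope

variable {𝕜 E : Type*} [NontriviallyNormedField 𝕜] [NormedAddCommGroup E] [NormedSpace 𝕜 E]
  {f : 𝕜 → E} {a b : 𝕜}

theorem AnalyticAt.dslope_same (hf : AnalyticAt 𝕜 f a) : AnalyticAt 𝕜 (dslope f a) a :=
  let ⟨_, hp⟩ := hf
  ⟨_, hp.has_fpower_series_dslope_fslope⟩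

theorem AnalyticAt.dslope_of_ne (hf : AnalyticAt 𝕜 f b) (h : b ≠ a) :
    AnalyticAt 𝕜 (dslope f a) b := by
  refine AnalyticAt.congr ?_ (dslope_eventuallyEq_slope_of_ne f h).symm
  have : b - a ≠ 0 := sub_ne_zero.mpr h
  simp only [slope_fun_def, vsub_eq_sub]
  fun_prop (disch := assumption)

theorem AnalyticOnNhd.dslope (hf : AnalyticOnNhd 𝕜 f Set.univ) :
    AnalyticOnNhd 𝕜 (dslope f a) Set.univ := fun b _ ↦ by
  rcases eq_or_ne b a with rfl | h
  · exact (hf b trivial).dslope_same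
  · exact (hf b trivial).dslope_of_ne h

end DSlope

theorem norm_iteratedDeriv_inv {𝕜 : Type*} [RCLike 𝕜] (k : ℕ) (x : 𝕜) :
    ‖iteratedDeriv k Inv.inv x‖ = k ! / ‖x‖ ^ (k + 1) := by
  rw [iteratedDeriv_eq_iterate, iter_deriv_inv, norm_mul, norm_mul, norm_pow, norm_neg, norm_one,
    one_pow, one_mul, norm_natCast, norm_zpow, div_eq_mul_inv, ← zpow_natCast, ← zpow_neg]
  push_cast
  ring_nf

theorem sinc_eq_dslope : sinc = dslope Real.sin 0 := Real.sinc_eq_dslope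

theorem contDiff_sinc {n : WithTop ℕ∞} : ContDiff ℝ n sinc := by
  rw [sinc_eq_dslope]
  exact Real.analyticOnNhd_sin.dslope.contDiff

theorem iteratedDeriv_sinc_of_ne_zero (n : ℕ) {x : ℝ} (hx : x ≠ 0) :
    iteratedDeriv n sinc x = ∑ i ∈ Finset.range (n + 1),
      n.choose i * iteratedDeriv i Real.sin x * iteratedDeriv (n - i) Inv.inv x := by
  have : sinc =ᶠ[𝓝 x] Real.sin * Inv.inv := by
    filter_upwards [isOpen_ne.mem_nhds hx] with y hy
    exact (Real.sinc_of_ne_zero hy).trans (div_eq_mul_inv _ _)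
  rw [this.iteratedDeriv_eq, iteratedDeriv_mul Real.contDiff_sin.contDiffAt (contDiffAt_inv ℝ hx)]

theorem abs_iteratedDeriv_sinc_le (n : ℕ) {x : ℝ} (hx : 1 ≤ |x|) :
    |iteratedDeriv n sinc x| ≤ 2 ^ n * n ! / |x| := by
  have hx0 : x ≠ 0 := abs_pos.mp (one_pos.trans_le hx)
  have htwo : (2 : ℝ) ^ n = ∑ i ∈ Finset.range (n + 1), (n.choose i : ℝ) := by
    exact_mod_cast (Nat.sum_range_choose n).symm
  rw [iteratedDeriv_sinc_of_ne_zero n hx0, htwo, Finset.sum_mul, Finset.sum_div]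
  refine (Finset.abs_sum_le_sum_abs _ _).trans (Finset.sum_le_sum fun i _ ↦ ?_)
  have hsin := Real.abs_iteratedDeriv_sin_le_one i x
  have hinv : |iteratedDeriv (n - i) Inv.inv x| ≤ n ! / |x| := by
    rw [← Real.norm_eq_abs, norm_iteratedDeriv_inv, Real.norm_eq_abs]
    calc ((n - i) ! : ℝ) / |x| ^ (n - i + 1) ≤ (n - i) ! / |x| :=
          div_le_div_of_nonneg_left (by positivity) (by positivity) (le_self_pow₀ hx (by omega))
      _ ≤ n ! / |x| := by gcongr; exact Nat.sub_le n i
  rw [abs_mul, abs_mul, Nat.abs_cast, mul_assoc, mul_div_assoc]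
  gcongr
  exact (mul_le_mul hsin hinv (abs_nonneg _) zero_le_one).trans_eq (one_mul _)

theorem tendsto_iteratedDeriv_sinc_cocompact (n : ℕ) :
    Tendsto (iteratedDeriv n sinc) (cocompact ℝ) (𝓝 0) := by
  have habs : Tendsto (fun x : ℝ ↦ |x|) (cocompact ℝ) atTop := tendsto_norm_cocompact_atTop
  refine squeeze_zero_norm' ?_ ((tendsto_const_nhds (x := (2 ^ n * n ! : ℝ))).div_atTop habs)
  filter_upwards [habs.eventually_ge_atTop 1] with x hx
  exact abs_iteratedDeriv_sinc_le n hx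

theorem stmt_2 (n : ℕ) :
    (∃ C : ℝ, ∀ x : ℝ, |iteratedDeriv n sinc x| ≤ C) ∧
      Tendsto (iteratedDeriv n sinc) atTop (nhds 0) ∧
      Tendsto (iteratedDeriv n sinc) atBot (nhds 0) := by
  have hlim := tendsto_iteratedDeriv_sinc_cocompact n
  let f : ZeroAtInftyContinuousMap ℝ ℝ :=
    ⟨⟨_, contDiff_sinc.continuous_iteratedDeriv n le_top⟩, hlim⟩
  obtain ⟨C, hC⟩ := isBounded_iff_forall_norm_le.mp f.isBounded_range
  exact ⟨⟨C, fun x ↦ hC _ ⟨x, rfl⟩⟩, hlim.mono_left atTop_le_cocompact,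
    hlim.mono_left atBot_le_cocompact⟩
end

section
/- Let ℓ ∈ ℕ₀. Then for every y ∈ ℝ one has ∫_ℝ |x|^ℓ e^{-|x|} e^{-|y-x|} dx = (e^{-|y|}/(ℓ+1)) · ( |y|^{ℓ+1} + Σ_{j=0}^{ℓ-1} ((ℓ+1)!/(ℓ-j)!) · |y|^{ℓ-j} / 2^{1+j} + (ℓ+1)!/2^ℓ ). -/
/-! For `y ≥ 0` the integrand equals `e^{-y} (-x)^ℓ e^{2x}` on `x ≤ 0`, `e^{-y} x^ℓ` on `(0, y]`
and `e^{y} x^ℓ e^{-2x}` on `x > y`. Both unbounded pieces are tails `∫_c^∞ x^ℓ e^{-2x} dx`, which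
repeated integration by parts evaluates in closed form; negative `y` reduces to `-y` through the
substitution `x ↦ -x`. -/

open MeasureTheory Finset
open Set Filter Real Nat Topology

section ExpTail

variable {a : ℝ}

theorem tendsto_pow_mul_exp_neg_mul_atTop_nhds_zero (n : ℕ) (ha : 0 < a) :
    Tendsto (fun x : ℝ => x ^ n * exp (-a * x)) atTop (𝓝 0) := by
  simpa using tendsto_rpow_mul_exp_neg_mul_atTop_nhds_zero n a ha

theorem integrableOn_pow_mul_exp_neg_mul_Ioi (n : ℕ) (ha : 0 < a) (y : ℝ) :
    IntegrableOn (fun x : ℝ => x ^ n * exp (-a * x)) (Ioi y) := by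
  refine integrable_of_isBigO_exp_neg (half_pos ha) (by fun_prop) ?_
  have hbound := (tendsto_pow_mul_exp_neg_mul_atTop_nhds_zero n (half_pos ha)).isBigO_one ℝ
  refine (hbound.mul (Asymptotics.isBigO_refl (fun x => exp (-(a / 2) * x)) atTop)).congr
    (fun x => ?_) (fun x => one_mul _)
  rw [mul_assoc, ← exp_add]
  ring_nf

theorem integral_Ioi_pow_succ_mul_exp_neg_mul (n : ℕ) (ha : 0 < a) (y : ℝ) :
    ∫ x in Ioi y, x ^ (n + 1) * exp (-a * x) =
      y ^ (n + 1) * exp (-a * y) / a + (n + 1) / a * ∫ x in Ioi y, x ^ n * exp (-a * x) := by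
  set u : ℝ → ℝ := fun x => x ^ (n + 1)
  set v : ℝ → ℝ := fun x => -exp (-a * x) / a
  have hv (x : ℝ) : HasDerivAt v (exp (-a * x)) x := by
    refine (((hasDerivAt_id' x).const_mul (-a)).exp.neg.div_const a).congr_deriv ?_
    field_simp
  have hu'v : IntegrableOn (fun x => ((n + 1 : ℕ) * x ^ n) * v x) (Ioi y) :=
    IntegrableOn.congr_fun
      ((integrableOn_pow_mul_exp_neg_mul_Ioi n ha y).const_mul (-((n + 1) / a)))
      (fun x _ => by simp only [v]; push_cast; ring) measurableSet_Ioi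
  have huv_top : Tendsto (u * v) atTop (𝓝 0) := by
    have h := (tendsto_pow_mul_exp_neg_mul_atTop_nhds_zero (n + 1) ha).div_const (-a)
    rw [zero_div] at h
    refine h.congr fun x => ?_
    simp only [u, v, Pi.mul_apply]
    ring
  have huv_y : Tendsto (u * v) (𝓝[>] y) (𝓝 (u y * v y)) :=
    ((by fun_prop : Continuous (u * v)).tendsto y).mono_left nhdsWithin_le_nhds
  have parts := integral_Ioi_mul_deriv_eq_deriv_mul (fun x _ => hasDerivAt_pow (n + 1) x)
    (fun x _ => hv x) (integrableOn_pow_mul_exp_neg_mul_Ioi (n + 1) ha y) hu'v huv_y huv_top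
  rw [parts, ← integral_const_mul, sub_eq_add_neg _ (integral _ _), ← integral_neg]
  congr 1
  · simp only [u, v]
    ring
  · congr 1 with x
    simp only [v, Nat.add_sub_cancel]
    push_cast
    ring

theorem integral_Ioi_pow_mul_exp_neg_mul (n : ℕ) (ha : 0 < a) (y : ℝ) :
    ∫ x in Ioi y, x ^ n * exp (-a * x) =
      exp (-a * y) * ∑ j ∈ range (n + 1), (n ! / (n - j)! : ℝ) * y ^ (n - j) / a ^ (j + 1) := by
  induction n with
  | zero =>
    simp only [pow_zero, one_mul, integral_exp_mul_Ioi (neg_lt_zero.mpr ha), sum_range_one,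
      Nat.sub_zero, factorial_zero, cast_one, div_one, zero_add, pow_one]
    ring
  | succ n ih =>
    have hterm (j : ℕ) :
        ((n + 1)! / (n + 1 - (j + 1))! : ℝ) * y ^ (n + 1 - (j + 1)) / a ^ (j + 1 + 1) =
          (n + 1) / a * (n ! / (n - j)! * y ^ (n - j) / a ^ (j + 1)) := by
      rw [Nat.add_sub_add_right, factorial_succ]
      push_cast
      ring
    rw [integral_Ioi_pow_succ_mul_exp_neg_mul n ha y, ih, sum_range_succ' _ (n + 1), Nat.sub_zero,
      div_self (by positivity)]
    simp only [hterm, ← mul_sum]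
    ring

theorem integral_Ioi_zero_pow_mul_exp_neg_mul (n : ℕ) (ha : 0 < a) :
    ∫ x in Ioi 0, x ^ n * exp (-a * x) = n ! / a ^ (n + 1) := by
  rw [integral_Ioi_pow_mul_exp_neg_mul n ha, sum_range_succ,
    sum_eq_zero fun j hj => by rw [zero_pow (by grind), mul_zero, zero_div]]
  simp

end ExpTail

theorem integral_eq_Iic_add_Ioc_add_Ioi {E : Type*} [NormedAddCommGroup E] [NormedSpace ℝ E]
    {μ : Measure ℝ} {f : ℝ → E} {b c : ℝ} (hbc : b ≤ c) (hleft : IntegrableOn f (Iic b) μ)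
    (hmid : IntegrableOn f (Ioc b c) μ) (hright : IntegrableOn f (Ioi c) μ) :
    ∫ x, f x ∂μ = ∫ x in Iic b, f x ∂μ + ∫ x in Ioc b c, f x ∂μ + ∫ x in Ioi c, f x ∂μ := by
  have hIoi : IntegrableOn f (Ioi b) μ := Ioc_union_Ioi_eq_Ioi hbc ▸ hmid.union hright
  rw [← intervalIntegral.integral_Iic_add_Ioi hleft hIoi, ← Ioc_union_Ioi_eq_Ioi hbc,
    setIntegral_union (Ioc_disjoint_Ioi le_rfl) measurableSet_Ioi hmid hright, add_assoc]

namespace AbsPowExpConvolution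

section Pieces

variable (n : ℕ) {y : ℝ}

theorem eqOn_Iic (hy : 0 ≤ y) : EqOn (fun x => |x| ^ n * exp (-|x|) * exp (-|y - x|))
    (fun x => exp (-y) * ((-x) ^ n * exp (-2 * -x))) (Iic 0) := fun x hx => by
  dsimp only
  rw [abs_of_nonpos hx, abs_of_nonneg (by linarith [mem_Iic.mp hx] : 0 ≤ y - x), mul_assoc,
    ← exp_add, mul_left_comm, ← exp_add]
  ring_nf

theorem eqOn_Ioc : EqOn (fun x => |x| ^ n * exp (-|x|) * exp (-|y - x|))
    (fun x => exp (-y) * x ^ n) (Ioc 0 y) := fun x hx => by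
  dsimp only
  rw [abs_of_pos hx.1, abs_of_nonneg (by linarith [hx.2] : 0 ≤ y - x), mul_assoc, ← exp_add]
  ring_nf

theorem eqOn_Ioi (hy : 0 ≤ y) : EqOn (fun x => |x| ^ n * exp (-|x|) * exp (-|y - x|))
    (fun x => exp y * (x ^ n * exp (-2 * x))) (Ioi y) := fun x hx => by
  dsimp only
  rw [abs_of_pos (hy.trans_lt hx), abs_of_neg (by linarith [mem_Ioi.mp hx] : y - x < 0),
    mul_assoc, ← exp_add, mul_left_comm, ← exp_add]
  ring_nf

theorem integral_of_nonneg (hy : 0 ≤ y) :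
    ∫ x, |x| ^ n * exp (-|x|) * exp (-|y - x|) =
      exp (-y) * (n ! / 2 ^ (n + 1) + y ^ (n + 1) / (n + 1) +
        ∑ j ∈ range (n + 1), (n ! / (n - j)! : ℝ) * y ^ (n - j) / 2 ^ (j + 1)) := by
  have hexp := integrableOn_pow_mul_exp_neg_mul_Ioi n two_pos
  have ileft : IntegrableOn (fun x => |x| ^ n * exp (-|x|) * exp (-|y - x|)) (Iic 0) := by
    have h : IntegrableOn (fun x : ℝ => x ^ n * exp (-2 * x)) (Ici (-0)) := by
      rw [neg_zero, integrableOn_Ici_iff_integrableOn_Ioi]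
      exact hexp 0
    exact IntegrableOn.congr_fun (h.comp_neg_Iic.const_mul _) (eqOn_Iic n hy).symm
      measurableSet_Iic
  have imid : IntegrableOn (fun x => |x| ^ n * exp (-|x|) * exp (-|y - x|)) (Ioc 0 y) :=
    (by fun_prop : Continuous fun x => |x| ^ n * exp (-|x|) * exp (-|y - x|)).integrableOn_Ioc
  have iright : IntegrableOn (fun x => |x| ^ n * exp (-|x|) * exp (-|y - x|)) (Ioi y) :=
    IntegrableOn.congr_fun ((hexp y).const_mul _) (eqOn_Ioi n hy).symm measurableSet_Ioi
  rw [integral_eq_Iic_add_Ioc_add_Ioi hy ileft imid iright,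
    setIntegral_congr_fun measurableSet_Iic (eqOn_Iic n hy),
    setIntegral_congr_fun measurableSet_Ioc (eqOn_Ioc n),
    setIntegral_congr_fun measurableSet_Ioi (eqOn_Ioi n hy), integral_const_mul,
    integral_const_mul, integral_const_mul, integral_comp_neg_Iic 0 (fun t => t ^ n * exp (-2 * t)),
    neg_zero, integral_Ioi_zero_pow_mul_exp_neg_mul n two_pos,
    ← intervalIntegral.integral_of_le hy, integral_pow, zero_pow n.succ_ne_zero, sub_zero,
    integral_Ioi_pow_mul_exp_neg_mul n two_pos, ← mul_assoc, ← exp_add,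
    show y + -2 * y = -y by ring]
  ring

end Pieces

theorem integral_even (n : ℕ) (y : ℝ) :
    ∫ x, |x| ^ n * exp (-|x|) * exp (-|-y - x|) = ∫ x, |x| ^ n * exp (-|x|) * exp (-|y - x|) := by
  rw [← integral_neg_eq_self (fun x => |x| ^ n * exp (-|x|) * exp (-|y - x|))]
  congr 1 with x
  rw [abs_neg, ← abs_neg (-y - x)]
  ring_nf

-- The `j = n` term of the tail sum merges with the contribution `n! / 2^(n+1)` of `(-∞, 0]`.
theorem sum_pieces_eq (n : ℕ) (z : ℝ) :
    n ! / 2 ^ (n + 1) + z ^ (n + 1) / (n + 1) +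
        ∑ j ∈ range (n + 1), (n ! / (n - j)! : ℝ) * z ^ (n - j) / 2 ^ (j + 1) =
      (z ^ (n + 1) + ∑ j ∈ range n, ((n + 1)! / (n - j)! : ℝ) * z ^ (n - j) / 2 ^ (1 + j) +
        (n + 1)! / 2 ^ n) / (n + 1) := by
  have hterm (j : ℕ) : ((n + 1)! / (n - j)! : ℝ) * z ^ (n - j) / 2 ^ (1 + j) =
      (n + 1) * (n ! / (n - j)! * z ^ (n - j) / 2 ^ (j + 1)) := by
    rw [factorial_succ, add_comm 1 j]
    push_cast
    ring
  rw [sum_range_succ, Nat.sub_self, sum_congr rfl fun j _ => hterm j, ← mul_sum, factorial_succ]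
  push_cast
  field_simp
  ring

end AbsPowExpConvolution

open AbsPowExpConvolution in
theorem stmt_4 (ℓ : ℕ) (y : ℝ) :
    ∫ x : ℝ, |x| ^ ℓ * Real.exp (-|x|) * Real.exp (-|y - x|) =
      (Real.exp (-|y|) / (ℓ + 1)) *
        (|y| ^ (ℓ + 1) +
          (∑ j ∈ Finset.range ℓ,
            ((Nat.factorial (ℓ + 1) : ℝ) / (Nat.factorial (ℓ - j))) * |y| ^ (ℓ - j) / 2 ^ (1 + j)) +
          (Nat.factorial (ℓ + 1) : ℝ) / 2 ^ ℓ) := by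
  have hnonneg {z : ℝ} (hz : 0 ≤ z) :
      ∫ x : ℝ, |x| ^ ℓ * exp (-|x|) * exp (-|z - x|) =
        (exp (-z) / (ℓ + 1)) * (z ^ (ℓ + 1) + (∑ j ∈ range ℓ,
          ((ℓ + 1)! / (ℓ - j)! : ℝ) * z ^ (ℓ - j) / 2 ^ (1 + j)) + (ℓ + 1)! / 2 ^ ℓ) := by
    rw [integral_of_nonneg ℓ hz, sum_pieces_eq]
    ring
  rcases le_total 0 y with hy | hy
  · rw [abs_of_nonneg hy, hnonneg hy]
  · rw [abs_of_nonpos hy, ← hnonneg (neg_nonneg.mpr hy), integral_even]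
end

section
/- For every ℓ ∈ ℕ with ℓ ≥ 1 one has Σ_{j=0}^{ℓ-1} cos((ℓ−j)·π/4) · 2^{−(ℓ+j−2)/2} · binomial(ℓ+j−1, ℓ−1) = 1, where 2^{−(ℓ+j−2)/2} denotes the real power of 2 with exponent −(ℓ+j−2)/2. -/
open Finset

lemma aux13 {R : Type*} [CommRing R] (x y : R) (h : x + y = 1) (n m : ℕ) :
    x * ∑ j ∈ range (m+1), ((n+1+j).choose j : R) * y^j
      = (∑ j ∈ range (m+1), ((n+j).choose j : R) * y^j) - ((n+1+m).choose m : R) * y^(m+1) := by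
  induction m with
  | zero => simp; linear_combination h
  | succ m ih =>
      rw [sum_range_succ _ (m+1), mul_add, ih, sum_range_succ _ (m+1)]
      have hp : ((n+1+(m+1)).choose (m+1) : R) = ((n+1+m).choose m : R) + ((n+1+m).choose (m+1) : R) := by
        have : (n+1+(m+1)).choose (m+1) = (n+1+m).choose m + (n+1+m).choose (m+1) := by
          rw [show n+1+(m+1) = (n+1+m)+1 by ring, Nat.choose_succ_succ]
        exact_mod_cast congrArg (Nat.cast : ℕ → R) this
      have hq : ((n+(m+1)).choose (m+1) : R) = ((n+1+m).choose (m+1) : R) := by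
        norm_num [show n+(m+1) = n+1+m by ring]
      linear_combination (y^(m+1)) * hp - y^(m+1) * hq + (((n+1+(m+1)).choose (m+1) : R) * y^(m+1)) * h

lemma key13 {R : Type*} [CommRing R] (x y : R) (h : x + y = 1) (n : ℕ) :
    ∑ j ∈ range (n+1), ((n+j).choose j : R) * (x^(n+1) * y^j + y^(n+1) * x^j) = 1 := by
  induction n with
  | zero => simpa using h
  | succ n ih =>
      have h' : y + x = 1 := by rw [add_comm]; exact h
      have e1 := aux13 x y h n (n+1)
      have e2 := aux13 y x h' n (n+1)
      have hterm : ∀ j ∈ range (n+2), ((n+1+j).choose j : R) * (x^(n+2) * y^j + y^(n+2) * x^j)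
          = x^(n+1) * (x * (((n+1+j).choose j : R) * y^j))
            + y^(n+1) * (y * (((n+1+j).choose j : R) * x^j)) := fun j _ => by ring
      rw [sum_congr rfl hterm, sum_add_distrib, ← mul_sum, ← mul_sum, ← mul_sum, ← mul_sum,
        e1, e2, sum_range_succ _ (n+1), sum_range_succ _ (n+1)]
      have ihs : x^(n+1) * (∑ j ∈ range (n+1), ((n+j).choose j : R) * y^j)
          + y^(n+1) * (∑ j ∈ range (n+1), ((n+j).choose j : R) * x^j) = 1 := by
        rw [mul_sum, mul_sum, ← sum_add_distrib, ← ih]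
        exact sum_congr rfl fun j _ => by ring
      have hc : ((n+1+(n+1)).choose (n+1) : R)
          = ((n+(n+1)).choose (n+1) : R) + ((n+(n+1)).choose (n+1) : R) := by
        have h1 : (n+1+(n+1)).choose (n+1) = (n+(n+1)).choose n + (n+(n+1)).choose (n+1) := by
          rw [show n+1+(n+1) = (n+(n+1))+1 by ring, Nat.choose_succ_succ]
        have h2 : (n+(n+1)).choose n = (n+(n+1)).choose (n+1) := by
          have := Nat.choose_symm (show n+1 ≤ n+(n+1) by omega)
          simpa [show n+(n+1)-(n+1) = n by omega] using this
        rw [h1, h2]; push_cast; ring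
      linear_combination ihs - (x^(n+1)*y^(n+1)) * hc
        - (((n+1+(n+1)).choose (n+1) : R) * x^(n+1) * y^(n+1)) * h

lemma hexp13 (r : ℝ) : Complex.exp (Complex.ofReal r * Complex.I)
      + Complex.exp (Complex.ofReal (-r) * Complex.I) = Complex.ofReal (2 * Real.cos r) := by
  rw [Complex.exp_mul_I, Complex.exp_mul_I]
  push_cast
  rw [Complex.cos_neg, Complex.sin_neg, ← Complex.ofReal_cos]
  push_cast
  ring

lemma term13 (n j : ℕ) (a θ : ℝ)
    (x y : ℂ) (hx : x = (a:ℂ) * Complex.exp (Complex.ofReal θ * Complex.I))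
    (hy : y = (a:ℂ) * Complex.exp (Complex.ofReal (-θ) * Complex.I)) :
    x^(n+1) * y^j + y^(n+1) * x^j
      = Complex.ofReal (2 * a^(n+1+j) * Real.cos (((n:ℝ)+1-j)*θ)) := by
  have e1 : x^(n+1) * y^j = (a:ℂ)^(n+1+j) * Complex.exp (Complex.ofReal (((n:ℝ)+1-j)*θ) * Complex.I) := by
    rw [hx, hy, mul_pow, mul_pow, ← Complex.exp_nat_mul, ← Complex.exp_nat_mul, mul_mul_mul_comm,
      ← Complex.exp_add, ← pow_add]
    congr 2
    push_cast
    ring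
  have e2 : y^(n+1) * x^j = (a:ℂ)^(n+1+j) * Complex.exp (Complex.ofReal (-(((n:ℝ)+1-j)*θ)) * Complex.I) := by
    rw [hx, hy, mul_pow, mul_pow, ← Complex.exp_nat_mul, ← Complex.exp_nat_mul, mul_mul_mul_comm,
      ← Complex.exp_add, ← pow_add]
    congr 2
    push_cast
    ring
  rw [e1, e2, ← mul_add, hexp13]
  push_cast
  ring

theorem stmt_13 (ℓ : ℕ) (hℓ : 1 ≤ ℓ) :
    ∑ j ∈ Finset.range ℓ,
        Real.cos (((ℓ : ℝ) - j) * Real.pi / 4) * (2 : ℝ) ^ (-(((ℓ : ℝ) + j - 2) / 2)) *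
          (Nat.choose (ℓ + j - 1) (ℓ - 1) : ℝ) = 1 := by
  obtain ⟨n, rfl⟩ : ∃ n, ℓ = n + 1 := ⟨ℓ - 1, by omega⟩
  have hs2 : (0:ℝ) < Real.sqrt 2 := Real.sqrt_pos.mpr (by norm_num)
  set a : ℝ := (Real.sqrt 2)⁻¹ with hadef
  set θ : ℝ := Real.pi / 4 with hθdef
  set x : ℂ := (a:ℂ) * Complex.exp (Complex.ofReal θ * Complex.I) with hx
  set y : ℂ := (a:ℂ) * Complex.exp (Complex.ofReal (-θ) * Complex.I) with hy
  have hxy : x + y = 1 := by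
    rw [hx, hy, ← mul_add, hexp13, hθdef, Real.cos_pi_div_four]
    have hone : a * (2 * (Real.sqrt 2 / 2)) = 1 := by
      rw [hadef]; field_simp
    calc (a:ℂ) * ((2 * (Real.sqrt 2 / 2) : ℝ) : ℂ)
        = ((a * (2 * (Real.sqrt 2 / 2)) : ℝ) : ℂ) := by push_cast; ring
      _ = 1 := by rw [hone]; norm_num
  have hkey := key13 x y hxy n
  trans (∑ j ∈ range (n+1), (((n+j).choose j : ℂ) * (x^(n+1) * y^j + y^(n+1) * x^j)).re)
  · apply sum_congr rfl
    intro j hj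
    rw [term13 n j a θ x y hx hy]
    rw [show (((n+j).choose j : ℕ) : ℂ) * Complex.ofReal (2 * a^(n+1+j) * Real.cos (((n:ℝ)+1-j)*θ))
        = Complex.ofReal (((n+j).choose j : ℝ) * (2 * a^(n+1+j) * Real.cos (((n:ℝ)+1-j)*θ))) by
      push_cast; ring]
    rw [Complex.ofReal_re]
    have hch : (n+1+j-1).choose (n+1-1) = (n+j).choose j := by
      have h1 : n+1+j-1 = n+j := by omega
      have h2 : n+1-1 = n := by omega
      rw [h1, h2]
      have := Nat.choose_symm (Nat.le_add_right n j)
      simpa [Nat.add_sub_cancel_left] using this.symm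
    rw [hch]
    have ha2 : a = (2:ℝ) ^ (-(1/2) : ℝ) := by
      rw [hadef, Real.sqrt_eq_rpow, ← Real.rpow_neg (by norm_num)]
    have hpow : (2:ℝ) ^ (-((((n:ℝ)+1) + (j:ℝ) - 2) / 2)) = 2 * a^(n+1+j) := by
      rw [ha2, ← Real.rpow_natCast ((2:ℝ) ^ (-(1/2) : ℝ)) (n+1+j), ← Real.rpow_mul (by norm_num)]
      rw [show 2 * (2:ℝ)^((-(1/2):ℝ) * (((n+1+j:ℕ)):ℝ)) = (2:ℝ)^((1:ℝ) + (-(1/2):ℝ)*(((n+1+j:ℕ)):ℝ)) by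
        rw [Real.rpow_add (by norm_num), Real.rpow_one]]
      congr 1
      push_cast
      ring
    have hcos : Real.cos ((((n:ℝ)+1) - (j:ℝ)) * Real.pi / 4) = Real.cos (((n:ℝ)+1-(j:ℝ))*θ) := by
      rw [hθdef]; ring_nf
    push_cast
    rw [hpow, hcos]
    ring
  · rw [← Complex.re_sum, hkey, Complex.one_re]
end

section
/- Let m ∈ ℕ with m ≥ 1 and let r be an integer with 1 ≤ r ≤ m. Then Σ_{j=r}^{m} (−1)^j · binomial(m, j) · (j−1)!/(j−r)! = (−1)^r · (r−1)!. -/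
/-!
Since `(j - 1)! / (j - r)! = (r - 1)! * C(j - 1, r - 1)`, it suffices to show
`∑ j, (-1)^j C(m, j) C(j - 1, r - 1) = (-1)^r`. By Pascal's rule, passing from `m` to `m + 1`
changes this sum by `-∑ k, (-1)^k C(m, k) C(k, r - 1)`. As
`C(m, k) C(k, s) = C(m, s) C(m - s, k - s)`, the binomial theorem shows that this alternating
sum vanishes unless `m = r - 1`, where it is `(-1)^(r - 1)`; so the sum is `0` for `m < r`
and jumps to `(-1)^r` at `m = r`.
-/

open Finset

open scoped Nat

theorem alternating_sum_range_choose_mul_choose (m s : ℕ) :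
    ∑ k ∈ range (m + 1), (-1 : ℤ) ^ k * m.choose k * k.choose s =
      if m = s then (-1) ^ s else 0 := by
  rcases lt_or_ge m s with hms | hsm
  · rw [if_neg hms.ne]
    refine sum_eq_zero fun k hk => ?_
    rw [Nat.choose_eq_zero_of_lt (n := k) (by grind), Nat.cast_zero, mul_zero]
  obtain ⟨n, rfl⟩ := Nat.exists_eq_add_of_le hsm
  have low_terms : ∑ k ∈ range s, (-1 : ℤ) ^ k * (s + n).choose k * k.choose s = 0 :=
    sum_eq_zero fun k hk => by
      rw [Nat.choose_eq_zero_of_lt (mem_range.1 hk), Nat.cast_zero, mul_zero]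
  have high_term (i : ℕ) : (-1 : ℤ) ^ (s + i) * (s + n).choose (s + i) * (s + i).choose s =
      (-1) ^ s * (s + n).choose s * ((-1) ^ i * n.choose i) := by
    have h := Nat.choose_mul (n := s + n) (Nat.le_add_right s i)
    simp only [Nat.add_sub_cancel_left] at h
    rw [pow_add, mul_assoc _ ((s + n).choose (s + i) : ℤ), ← Nat.cast_mul, h, Nat.cast_mul]
    ring
  rw [show s + n + 1 = s + (n + 1) by ring, sum_range_add, low_terms, zero_add]
  simp only [high_term, ← mul_sum, Int.alternating_sum_range_choose]
  by_cases hn : n = 0 <;> simp [hn]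

theorem sum_range_neg_one_pow_succ_mul_choose_succ_mul_choose (m s : ℕ) :
    ∑ j ∈ range m, (-1 : ℤ) ^ (j + 1) * m.choose (j + 1) * j.choose s =
      if s < m then (-1) ^ (s + 1) else 0 := by
  induction m with
  | zero => simp
  | succ m ih =>
    have pascal :
        ∑ j ∈ range (m + 1), (-1 : ℤ) ^ (j + 1) * (m + 1).choose (j + 1) * j.choose s =
        ∑ j ∈ range m, (-1 : ℤ) ^ (j + 1) * m.choose (j + 1) * j.choose s -
          ∑ k ∈ range (m + 1), (-1 : ℤ) ^ k * m.choose k * k.choose s := by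
      have top_term_vanishes :
          ∑ j ∈ range (m + 1), (-1 : ℤ) ^ (j + 1) * m.choose (j + 1) * j.choose s =
            ∑ j ∈ range m, (-1 : ℤ) ^ (j + 1) * m.choose (j + 1) * j.choose s := by
        simp [sum_range_succ _ m]
      rw [← top_term_vanishes, ← sum_sub_distrib]
      refine sum_congr rfl fun j _ => ?_
      rw [Nat.choose_succ_succ', Nat.cast_add]
      ring
    rw [pascal, ih, alternating_sum_range_choose_mul_choose]
    split_ifs <;> omega

theorem sum_Icc_neg_one_pow_mul_choose_mul_choose_pred {m r : ℕ} (hr : 1 ≤ r) (hrm : r ≤ m) :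
    ∑ j ∈ Icc r m, (-1 : ℤ) ^ j * m.choose j * (j - 1).choose (r - 1) = (-1) ^ r := by
  have extend_to_one : ∑ j ∈ Icc r m, (-1 : ℤ) ^ j * m.choose j * (j - 1).choose (r - 1) =
      ∑ j ∈ Icc 1 m, (-1 : ℤ) ^ j * m.choose j * (j - 1).choose (r - 1) := by
    refine sum_subset (Icc_subset_Icc_left hr) fun j hj hjr => ?_
    rw [mem_Icc] at hj hjr
    rw [Nat.choose_eq_zero_of_lt (n := j - 1) (by omega), Nat.cast_zero, mul_zero]
  -- Not down to `j = 0`: truncated subtraction makes `(0 - 1).choose 0 = 1`.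
  rw [extend_to_one, ← Ico_add_one_right_eq_Icc, sum_Ico_eq_sum_range, Nat.add_sub_cancel]
  simp only [add_comm 1, Nat.add_sub_cancel]
  rw [sum_range_neg_one_pow_succ_mul_choose_succ_mul_choose, if_pos (by omega),
    Nat.sub_add_cancel hr]

theorem Nat.cast_factorial_div_factorial_sub {K : Type*} [Field K] [CharZero K] {n k : ℕ}
    (h : k ≤ n) : (n ! : K) / (n - k)! = k ! * n.choose k := by
  rw [Nat.cast_choose K h, mul_div_left_comm,
    div_mul_cancel_left₀ (Nat.cast_ne_zero.2 k.factorial_ne_zero), div_eq_mul_inv]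

theorem stmt_14_general (m r : ℕ) (hr : 1 ≤ r) (hrm : r ≤ m) :
    ∑ j ∈ Finset.Icc r m,
        (-1 : ℝ) ^ j * (Nat.choose m j : ℝ) *
          ((Nat.factorial (j - 1) : ℝ) / (Nat.factorial (j - r) : ℝ)) =
      (-1 : ℝ) ^ r * (Nat.factorial (r - 1) : ℝ) := by
  have term (j : ℕ) (hj : j ∈ Icc r m) :
      (-1 : ℝ) ^ j * (m.choose j : ℝ) * ((j - 1)! / (j - r)! : ℝ) =
        (r - 1)! * (((-1 : ℤ) ^ j * m.choose j * (j - 1).choose (r - 1) : ℤ) : ℝ) := by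
    have hj := (mem_Icc.1 hj).1
    rw [show j - r = j - 1 - (r - 1) by omega, Nat.cast_factorial_div_factorial_sub (by omega)]
    push_cast
    ring
  rw [sum_congr rfl term, ← mul_sum, ← Int.cast_sum,
    sum_Icc_neg_one_pow_mul_choose_mul_choose_pred hr hrm]
  push_cast
  ring

theorem stmt_14 (m r : ℕ) (hm : 1 ≤ m) (hr : 1 ≤ r) (hrm : r ≤ m) :
    ∑ j ∈ Finset.Icc r m,
        (-1 : ℝ) ^ j * (Nat.choose m j : ℝ) *
          ((Nat.factorial (j - 1) : ℝ) / (Nat.factorial (j - r) : ℝ)) =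
      (-1 : ℝ) ^ r * (Nat.factorial (r - 1) : ℝ) :=
  stmt_14_general m r hr hrm
end

section
/- Let m ∈ ℕ₀. Then for all x ∈ ℝ: (1) ∫_ℝ e^{-|y|} · |y|^m · sin(x−y) dy = (m!/2^{(m−1)/2}) · cos((m+1)·π/4) · sin(x), and (2) ∫_ℝ e^{-|y|} · |y|^m · cos(x−y) dy = (m!/2^{(m−1)/2}) · cos((m+1)·π/4) · cos(x), where 2^{(m−1)/2} denotes the real power of 2 with exponent (m−1)/2. -/
/-!
Write `g(y) = e^{-|y|} |y|^m`. Since `g` is even and integrable, the addition formulas give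
`∫ g(y) sin(x - y) dy = G sin x` and `∫ g(y) cos(x - y) dy = G cos x` with `G = ∫ g(y) cos y dy`.
Folding the even integrand onto `(0, ∞)`, `G = 2 Re ∫₀^∞ t^m e^{-(1 - i)t} dt = 2 Re (m! / (1 - i)^{m+1})`,
and `(1 - i)⁻¹ = 2^{-1/2} e^{iπ/4}` turns this into `m! / 2^{(m-1)/2} · cos((m + 1)π/4)`.
-/

open MeasureTheory Set Filter Topology
open scoped Real

theorem integrableOn_pow_mul_exp_neg_mul_Ioi_s15 (n : ℕ) {b : ℝ} (hb : 0 < b) :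
    IntegrableOn (fun t : ℝ => t ^ n * Real.exp (-b * t)) (Ioi 0) := by
  refine (integrableOn_rpow_mul_exp_neg_mul_rpow (s := n) (p := 1)
    (by linarith [n.cast_nonneg (α := ℝ)]) one_pos hb).congr_fun (fun t _ => ?_) measurableSet_Ioi
  simp only [Real.rpow_natCast, Real.rpow_one]

theorem integrable_comp_abs {E : Type*} [NormedAddCommGroup E] {f : ℝ → E}
    (hf : IntegrableOn f (Ioi 0)) : Integrable (fun x => f |x|) := by
  have hIoi : IntegrableOn (fun x => f |x|) (Ioi 0) :=
    hf.congr_fun (fun x hx => by rw [abs_of_pos (mem_Ioi.mp hx)]) measurableSet_Ioi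
  have hIic : IntegrableOn (fun x => f |x|) (Iic 0) := by
    rw [← (Measure.measurePreserving_neg (volume : Measure ℝ)).integrableOn_comp_preimage
      (Homeomorph.neg ℝ).measurableEmbedding]
    simpa only [Function.comp_def, abs_neg, neg_preimage, neg_Iic, neg_zero]
      using (integrableOn_Ici_iff_integrableOn_Ioi).mpr hIoi
  simpa only [Iic_union_Ioi, integrableOn_univ] using hIic.union hIoi

section LaplaceTransformPow

variable {c : ℂ}

theorem norm_ofReal_pow_mul_cexp_neg_mul (n : ℕ) {t : ℝ} (ht : 0 ≤ t) :
    ‖(t : ℂ) ^ n * Complex.exp (-(c * t))‖ = t ^ n * Real.exp (-c.re * t) := by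
  rw [norm_mul, norm_pow, Complex.norm_real, Complex.norm_exp, Real.norm_of_nonneg ht]
  simp

theorem integrableOn_ofReal_pow_mul_cexp_neg_mul_Ioi (n : ℕ) (hc : 0 < c.re) :
    IntegrableOn (fun t : ℝ => (t : ℂ) ^ n * Complex.exp (-(c * t))) (Ioi 0) := by
  refine (integrableOn_pow_mul_exp_neg_mul_Ioi_s15 n hc).mono' (by fun_prop) ?_
  filter_upwards [ae_restrict_mem measurableSet_Ioi] with t ht
  exact (norm_ofReal_pow_mul_cexp_neg_mul n (le_of_lt ht)).le

theorem tendsto_ofReal_pow_mul_cexp_neg_mul_atTop (n : ℕ) (hc : 0 < c.re) :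
    Tendsto (fun t : ℝ => (t : ℂ) ^ n * Complex.exp (-(c * t))) atTop (𝓝 0) := by
  refine squeeze_zero_norm' ?_ (by simpa only [Real.rpow_natCast] using
    tendsto_rpow_mul_exp_neg_mul_atTop_nhds_zero n c.re hc)
  filter_upwards [eventually_ge_atTop 0] with t ht
  exact (norm_ofReal_pow_mul_cexp_neg_mul n ht).le

theorem integral_Ioi_cexp_neg_mul (hc : 0 < c.re) :
    ∫ t in Ioi (0 : ℝ), Complex.exp (-(c * t)) = c⁻¹ := by
  simpa [neg_div, div_neg] using integral_exp_mul_complex_Ioi (a := -c) (by simpa using hc) 0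

-- Integrate the derivative of `t ^ (n + 1) * exp (-c t)`, which vanishes at `0` and at `∞`.
theorem mul_integral_Ioi_ofReal_pow_succ_mul_cexp_neg_mul (n : ℕ) (hc : 0 < c.re) :
    c * ∫ t in Ioi (0 : ℝ), (t : ℂ) ^ (n + 1) * Complex.exp (-(c * t))
      = (n + 1) * ∫ t in Ioi (0 : ℝ), (t : ℂ) ^ n * Complex.exp (-(c * t)) := by
  have hderiv : ∀ t ∈ Ici (0 : ℝ),
      HasDerivAt (fun s : ℝ => (s : ℂ) ^ (n + 1) * Complex.exp (-(c * s)))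
        ((n + 1) * ((t : ℂ) ^ n * Complex.exp (-(c * t)))
          - c * ((t : ℂ) ^ (n + 1) * Complex.exp (-(c * t)))) t := by
    intro t _
    have hpow := (hasDerivAt_pow (n + 1) (t : ℂ)).comp_ofReal
    have hexp := (((hasDerivAt_id (t : ℂ)).const_mul c).neg.comp_ofReal).cexp
    refine (hpow.mul hexp).congr_deriv ?_
    push_cast
    simp only [Pi.neg_apply, id, mul_one]
    ring
  have hint := fun k => integrableOn_ofReal_pow_mul_cexp_neg_mul_Ioi k hc
  have hFTC := integral_Ioi_of_hasDerivAt_of_tendsto' hderiv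
    (((hint n).const_mul _).sub ((hint (n + 1)).const_mul _))
    (tendsto_ofReal_pow_mul_cexp_neg_mul_atTop (n + 1) hc)
  rw [integral_sub ((hint n).const_mul _) ((hint (n + 1)).const_mul _), integral_const_mul,
    integral_const_mul] at hFTC
  simp only [Complex.ofReal_zero, zero_pow n.succ_ne_zero, zero_mul, sub_zero] at hFTC
  linear_combination -hFTC

theorem integral_Ioi_ofReal_pow_mul_cexp_neg_mul (n : ℕ) (hc : 0 < c.re) :
    ∫ t in Ioi (0 : ℝ), (t : ℂ) ^ n * Complex.exp (-(c * t)) = n.factorial / c ^ (n + 1) := by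
  have hc0 : c ≠ 0 := fun h => by simp [h] at hc
  induction n with
  | zero => simpa using integral_Ioi_cexp_neg_mul hc
  | succ n ih =>
    have h := mul_integral_Ioi_ofReal_pow_succ_mul_cexp_neg_mul n hc
    rw [ih] at h
    apply mul_left_cancel₀ hc0
    rw [h, Nat.factorial_succ]
    push_cast
    field_simp
    ring

end LaplaceTransformPow

section EvenKernel

variable {g : ℝ → ℝ}

theorem integral_mul_sin_eq_zero_of_even (heven : g.Even) : ∫ y, g y * Real.sin y = 0 := by
  have h := integral_neg_eq_self (fun y => g y * Real.sin y) volume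
  simp only [heven _, Real.sin_neg, mul_neg, integral_neg] at h
  linarith

theorem MeasureTheory.Integrable.mul_sin (hg : Integrable g) :
    Integrable fun y => g y * Real.sin y :=
  hg.mul_bdd (c := 1) (by fun_prop) (ae_of_all _ fun y => by simpa using Real.abs_sin_le_one y)

theorem MeasureTheory.Integrable.mul_cos (hg : Integrable g) :
    Integrable fun y => g y * Real.cos y :=
  hg.mul_bdd (c := 1) (by fun_prop) (ae_of_all _ fun y => by simpa using Real.abs_cos_le_one y)

theorem integral_mul_sin_sub_of_even (hg : Integrable g) (heven : g.Even) (x : ℝ) :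
    ∫ y, g y * Real.sin (x - y) = (∫ y, g y * Real.cos y) * Real.sin x := calc
  _ = ∫ y, Real.sin x * (g y * Real.cos y) - Real.cos x * (g y * Real.sin y) := by
    congr 1 with y
    rw [Real.sin_sub]
    ring
  _ = Real.sin x * (∫ y, g y * Real.cos y) - Real.cos x * ∫ y, g y * Real.sin y := by
    rw [integral_sub (hg.mul_cos.const_mul _) (hg.mul_sin.const_mul _), integral_const_mul,
      integral_const_mul]
  _ = _ := by rw [integral_mul_sin_eq_zero_of_even heven]; ring

theorem integral_mul_cos_sub_of_even (hg : Integrable g) (heven : g.Even) (x : ℝ) :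
    ∫ y, g y * Real.cos (x - y) = (∫ y, g y * Real.cos y) * Real.cos x := calc
  _ = ∫ y, Real.cos x * (g y * Real.cos y) + Real.sin x * (g y * Real.sin y) := by
    congr 1 with y
    rw [Real.cos_sub]
    ring
  _ = Real.cos x * (∫ y, g y * Real.cos y) + Real.sin x * ∫ y, g y * Real.sin y := by
    rw [integral_add (hg.mul_cos.const_mul _) (hg.mul_sin.const_mul _), integral_const_mul,
      integral_const_mul]
  _ = _ := by rw [integral_mul_sin_eq_zero_of_even heven]; ring

end EvenKernel

theorem inv_one_sub_I_eq :
    (1 - Complex.I)⁻¹ = ((2 : ℝ) ^ (-(1 / 2 : ℝ)) : ℝ) * Complex.exp ((π / 4 : ℝ) * Complex.I) := by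
  have hsqrt : (2 : ℝ) ^ (-(1 / 2 : ℝ)) * (√2 / 2) = 1 / 2 := by
    rw [Real.rpow_neg zero_le_two, ← Real.sqrt_eq_rpow]
    field_simp
  rw [Complex.exp_mul_I, ← Complex.ofReal_cos, ← Complex.ofReal_sin, Real.cos_pi_div_four,
    Real.sin_pi_div_four, ← mul_one_add, ← mul_assoc, ← Complex.ofReal_mul, hsqrt]
  refine inv_eq_of_mul_eq_one_right ?_
  push_cast
  ring_nf
  rw [Complex.I_sq]
  ring

theorem two_mul_re_factorial_div_one_sub_I_pow (m : ℕ) :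
    2 * ((m.factorial : ℂ) / (1 - Complex.I) ^ (m + 1)).re
      = m.factorial / (2 : ℝ) ^ (((m : ℝ) - 1) / 2) * Real.cos (((m : ℝ) + 1) * π / 4) := by
  have hpow : ((2 : ℝ) ^ (-(1 / 2 : ℝ))) ^ (m + 1) = ((2 : ℝ) ^ (((m : ℝ) - 1) / 2))⁻¹ / 2 := by
    rw [← Real.rpow_natCast, ← Real.rpow_mul zero_le_two, ← Real.rpow_neg zero_le_two,
      ← Real.rpow_sub_one two_ne_zero]
    congr 1
    push_cast
    ring
  rw [div_eq_mul_inv, ← inv_pow, inv_one_sub_I_eq, mul_pow, ← Complex.exp_nat_mul,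
    ← Complex.ofReal_pow, hpow, ← mul_assoc, ← Complex.ofReal_natCast, ← Complex.ofReal_mul,
    Complex.re_ofReal_mul]
  rw [show ((m + 1 : ℕ) : ℂ) * ((π / 4 : ℝ) * Complex.I)
      = (((m : ℝ) + 1) * π / 4 : ℝ) * Complex.I by push_cast; ring,
    Complex.exp_ofReal_mul_I_re]
  ring

theorem integral_exp_neg_abs_mul_abs_pow_mul_cos (m : ℕ) :
    ∫ y, Real.exp (-|y|) * |y| ^ m * Real.cos y
      = m.factorial / (2 : ℝ) ^ (((m : ℝ) - 1) / 2) * Real.cos (((m : ℝ) + 1) * π / 4) := by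
  have hc : 0 < (1 - Complex.I).re := by simp
  have hre : ∀ t : ℝ, ((t : ℂ) ^ m * Complex.exp (-((1 - Complex.I) * t))).re
      = Real.exp (-t) * t ^ m * Real.cos t := fun t => by
    rw [← Complex.ofReal_pow, Complex.re_ofReal_mul, Complex.exp_re]
    simp only [sub_mul, one_mul, neg_sub, Complex.sub_re, Complex.sub_im, Complex.mul_re,
      Complex.mul_im, Complex.I_re, Complex.I_im, Complex.ofReal_re, Complex.ofReal_im]
    ring_nf
  have hIoi := integral_re (integrableOn_ofReal_pow_mul_cexp_neg_mul_Ioi m hc)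
  simp only [RCLike.re_to_complex, hre] at hIoi
  calc ∫ y, Real.exp (-|y|) * |y| ^ m * Real.cos y
      = ∫ y, (fun t => Real.exp (-t) * t ^ m * Real.cos t) |y| := by simp only [Real.cos_abs]
    _ = 2 * ∫ t in Ioi 0, Real.exp (-t) * t ^ m * Real.cos t :=
      integral_comp_abs (f := fun t => Real.exp (-t) * t ^ m * Real.cos t)
    _ = _ := by
      rw [hIoi, integral_Ioi_ofReal_pow_mul_cexp_neg_mul m hc,
        two_mul_re_factorial_div_one_sub_I_pow]

theorem stmt_15 (m : ℕ) (x : ℝ) :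
    (∫ y : ℝ, Real.exp (-|y|) * |y| ^ m * Real.sin (x - y) =
        ((Nat.factorial m : ℝ) / (2 : ℝ) ^ (((m : ℝ) - 1) / 2)) *
          Real.cos (((m : ℝ) + 1) * Real.pi / 4) * Real.sin x) ∧
      ∫ y : ℝ, Real.exp (-|y|) * |y| ^ m * Real.cos (x - y) =
        ((Nat.factorial m : ℝ) / (2 : ℝ) ^ (((m : ℝ) - 1) / 2)) *
          Real.cos (((m : ℝ) + 1) * Real.pi / 4) * Real.cos x := by
  have hg : Integrable fun y : ℝ => Real.exp (-|y|) * |y| ^ m :=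
    integrable_comp_abs (f := fun t => Real.exp (-t) * t ^ m) <| by
      simpa [mul_comm] using integrableOn_pow_mul_exp_neg_mul_Ioi_s15 m one_pos
  have heven : (fun y : ℝ => Real.exp (-|y|) * |y| ^ m).Even := fun y => by simp
  rw [← integral_exp_neg_abs_mul_abs_pow_mul_cos]
  exact ⟨integral_mul_sin_sub_of_even hg heven x, integral_mul_cos_sub_of_even hg heven x⟩
end
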